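/- Let F : S → T be a fully faithful triangulated functor with T having coproducts, S essentially small with metric {M_i}, and y : T → Mod-S the functor y(A) = Hom(F(−), A). Then y^{-1}(Fc(S)) = ⋂_{j ∈ ℤ} ⋃_{i ∈ ℕ} [F(T^j M_i)]^⊥, and in particular y^{-1}(Fc(S)) is a thick subcategory of T. -/

import Mathlib

namespace Stmt5

open CategoryTheory Category Limits Pretriangulated ZeroObject

universe v u u'

variable {S : Type u} [Category.{v} S] [Preadditive S] [HasZeroObject S]
  [HasShift S ℤ] [∀ n : ℤ, (CategoryTheory.shiftFunctor S n).Additive] [Pretriangulated S]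

structure TriMetric (S : Type u) [Category.{v} S] [Preadditive S] [HasZeroObject S]
    [HasShift S ℤ] [∀ n : ℤ, (CategoryTheory.shiftFunctor S n).Additive] [Pretriangulated S] where
  M : ℕ → Set S
  zero_mem : ∀ i, (0 : S) ∈ M i
  antitone : ∀ i, M (i + 1) ⊆ M i
  ext_closed : ∀ i, ∀ T ∈ (distTriang S), T.obj₁ ∈ M i → T.obj₃ ∈ M i → T.obj₂ ∈ M i

def CauchySeq (μ : TriMetric S) (E : ℕ ⥤ S) : Prop :=
  ∀ i : ℕ, 0 < i → ∀ j : ℤ, ∃ N : ℕ, 0 < N ∧ ∀ m m' : ℕ, N ≤ m → ∀ (hmm : m < m'),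
    ∀ (D : S) (g : E.obj m' ⟶ D) (h : D ⟶ (E.obj m)⟦(1 : ℤ)⟧),
      Triangle.mk (E.map (homOfLE hmm.le)) g h ∈ (distTriang S) → D⟦j⟧ ∈ μ.M i

variable {T : Type u'} [Category.{v} T] [Preadditive T] [HasZeroObject T]
  [HasShift T ℤ] [∀ n : ℤ, (CategoryTheory.shiftFunctor T n).Additive] [Pretriangulated T]
  [HasCoproducts.{0} T]

variable (F : S ⥤ T) [F.Additive]

/-- `y : T ⥤ Mod-S` on objects: `y(X) = Hom_T(F(−), X)`. -/
def yObj (X : T) : Sᵒᵖ ⥤ AddCommGrpCat.{v} := F.op ⋙ preadditiveYoneda.obj X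

/-- `y` on morphisms. -/
def yHom {X X' : T} (φ : X ⟶ X') : yObj F X ⟶ yObj F X' :=
  Functor.whiskerLeft F.op (preadditiveYoneda.map φ)

/-- The canonical map `Y(s₀) ⟶ y(X)` induced by `k : F(s₀) ⟶ X`. -/
def yMap {s₀ : S} {X : T} (k : F.obj s₀ ⟶ X) : preadditiveYoneda.obj s₀ ⟶ yObj F X where
  app s :=
    AddCommGrpCat.ofHom
    { toFun := fun f => F.map f ≫ k
      map_zero' := by exact (congrArg (· ≫ k) (F.map_zero s.unop s₀)).trans Limits.zero_comp
      map_add' := fun f g => by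
        change F.map (f + g) ≫ k = F.map f ≫ k + F.map g ≫ k
        exact (congrArg (· ≫ k) (F.map_add (f := (f : s.unop ⟶ s₀)) (g := g))).trans
          (Preadditive.add_comp _ _ _ _ _ _) }
  naturality a b t := by
    ext f
    change F.map (t.unop ≫ f) ≫ k = F.map t.unop ≫ (F.map f ≫ k)
    exact (congrArg (· ≫ k) (F.map_comp t.unop (f : a.unop ⟶ s₀))).trans (Category.assoc _ _ _)


/-- The right perpendicular of a class of objects. -/
def perpSet (P : Set T) : Set T := {X | ∀ p ∈ P, ∀ f : p ⟶ X, f = 0}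

/-- `Fc(S) ⊆ Mod-S`: the compactly supported objects. -/
def Fc (μ : TriMetric S) : Set (Sᵒᵖ ⥤ AddCommGrpCat.{v}) :=
  {A | ∀ j : ℤ, ∃ i : ℕ, ∀ s ∈ μ.M i, ∀ f : preadditiveYoneda.obj (s⟦j⟧) ⟶ A, f = 0}

/-!
By Yoneda, a map `Y(s) ⟶ y(X)` is determined by the image of `𝟙 s`, an arbitrary morphism
`F(s) ⟶ X`; so `y(X) ∈ Fc(S)` says exactly that for each `j` the object `X` is right orthogonal
to `F(T^j M_i)` for some `i`. Classes of this shape are thick: a right orthogonal is closed under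
summands and, by the long exact `Hom`-sequence, under extensions; the union over `i` is directed
because the `M_i` decrease; and since `F` commutes with shifts, shifting `X` by `n` trades the
`j`-th condition for the `(j - n)`-th.
-/

section Preadditive

variable {C : Type*} [Category C] [Preadditive C]

theorem preadditiveYoneda_hom_ext {c : C} {A : Cᵒᵖ ⥤ AddCommGrpCat}
    {f g : preadditiveYoneda.obj c ⟶ A}
    (h : f.app (Opposite.op c) (𝟙 c) = g.app (Opposite.op c) (𝟙 c)) : f = g := by
  ext d (x : d.unop ⟶ c)
  have hf : f.app d (x ≫ 𝟙 c) = A.map x.op (f.app _ (𝟙 c)) :=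
    ConcreteCategory.congr_hom (f.naturality x.op) (𝟙 c)
  have hg : g.app d (x ≫ 𝟙 c) = A.map x.op (g.app _ (𝟙 c)) :=
    ConcreteCategory.congr_hom (g.naturality x.op) (𝟙 c)
  rw [comp_id] at hf hg
  rw [hf, hg, h]

variable {P Q : Set C} {X Y : C}

theorem zero_mem_perpSet [HasZeroObject C] : (0 : C) ∈ perpSet P :=
  fun _ _ f => (isZero_zero C).eq_of_tgt f 0

theorem mem_perpSet_of_retract (r : X ⟶ Y) (s : Y ⟶ X) (hsr : s ≫ r = 𝟙 Y)
    (hX : X ∈ perpSet P) : Y ∈ perpSet P := fun p hp f => by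
  rw [← comp_id f, ← hsr, ← assoc, hX p hp (f ≫ s), zero_comp]

theorem mem_perpSet_of_iso (e : X ≅ Y) (hX : X ∈ perpSet P) : Y ∈ perpSet P :=
  mem_perpSet_of_retract e.hom e.inv e.inv_hom_id hX

theorem shift_mem_perpSet [HasShift C ℤ] [∀ n : ℤ, (shiftFunctor C n).Additive] {n : ℤ}
    (h : ∀ p ∈ Q, ∃ q ∈ P, Nonempty (p ≅ q⟦n⟧)) (hX : X ∈ perpSet P) :
    X⟦n⟧ ∈ perpSet Q := fun p hp f => by
  obtain ⟨q, hq, ⟨e⟩⟩ := h p hp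
  obtain ⟨g, hg⟩ := (shiftFunctor C n).map_surjective (e.inv ≫ f)
  rw [← cancel_epi e.inv, ← hg, hX q hq g, Functor.map_zero, comp_zero]

theorem mem_perpSet_of_distTriang [HasZeroObject C] [HasShift C ℤ]
    [∀ n : ℤ, (shiftFunctor C n).Additive] [Pretriangulated C] {Tr : Triangle C}
    (hTr : Tr ∈ distTriang C) (h₁ : Tr.obj₁ ∈ perpSet P) (h₃ : Tr.obj₃ ∈ perpSet P) :
    Tr.obj₂ ∈ perpSet P := fun p hp f => by
  obtain ⟨g, rfl⟩ := Triangle.coyoneda_exact₂ Tr hTr f (h₃ p hp _)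
  rw [h₁ p hp g, zero_comp]

def eventuallyPerp (P : ℤ → ℕ → Set C) : Set C := ⋂ j, ⋃ i, perpSet (P j i)

variable {P : ℤ → ℕ → Set C}

theorem mem_eventuallyPerp : X ∈ eventuallyPerp P ↔ ∀ j, ∃ i, X ∈ perpSet (P j i) := by
  simp only [eventuallyPerp, Set.mem_iInter, Set.mem_iUnion]

theorem zero_mem_eventuallyPerp [HasZeroObject C] : (0 : C) ∈ eventuallyPerp P :=
  mem_eventuallyPerp.2 fun _ => ⟨0, zero_mem_perpSet⟩

theorem mem_eventuallyPerp_of_retract (r : X ⟶ Y) (s : Y ⟶ X) (hsr : s ≫ r = 𝟙 Y)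
    (hX : X ∈ eventuallyPerp P) : Y ∈ eventuallyPerp P :=
  mem_eventuallyPerp.2 fun j =>
    (mem_eventuallyPerp.1 hX j).imp fun _ => mem_perpSet_of_retract r s hsr

theorem mem_eventuallyPerp_of_iso (e : X ≅ Y) (hX : X ∈ eventuallyPerp P) :
    Y ∈ eventuallyPerp P :=
  mem_eventuallyPerp_of_retract e.hom e.inv e.inv_hom_id hX

section Pretriangulated

variable [HasShift C ℤ] [∀ n : ℤ, (shiftFunctor C n).Additive]

theorem shift_mem_eventuallyPerp
    (hP : ∀ j n i, ∀ p ∈ P (j + n) i, ∃ q ∈ P j i, Nonempty (p ≅ q⟦n⟧))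
    (n : ℤ) (hX : X ∈ eventuallyPerp P) : X⟦n⟧ ∈ eventuallyPerp P := by
  refine mem_eventuallyPerp.2 fun j => ?_
  obtain ⟨i, hi⟩ := mem_eventuallyPerp.1 hX (j - n)
  exact ⟨i, shift_mem_perpSet (by simpa using hP (j - n) n i) hi⟩

theorem shift_one_mem_eventuallyPerp_iff
    (hP : ∀ j n i, ∀ p ∈ P (j + n) i, ∃ q ∈ P j i, Nonempty (p ≅ q⟦n⟧)) :
    X⟦(1 : ℤ)⟧ ∈ eventuallyPerp P ↔ X ∈ eventuallyPerp P :=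
  ⟨fun h => mem_eventuallyPerp_of_iso ((shiftFunctorCompIsoId C 1 (-1) (by norm_num)).app X)
    (shift_mem_eventuallyPerp hP (-1) h), shift_mem_eventuallyPerp hP 1⟩

variable [HasZeroObject C] [Pretriangulated C]

theorem mem_eventuallyPerp_of_distTriang (hP : ∀ j, Antitone (P j)) {Tr : Triangle C}
    (hTr : Tr ∈ distTriang C) (h₁ : Tr.obj₁ ∈ eventuallyPerp P)
    (h₃ : Tr.obj₃ ∈ eventuallyPerp P) : Tr.obj₂ ∈ eventuallyPerp P := by
  refine mem_eventuallyPerp.2 fun j => ?_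
  obtain ⟨i₁, hi₁⟩ := mem_eventuallyPerp.1 h₁ j
  obtain ⟨i₃, hi₃⟩ := mem_eventuallyPerp.1 h₃ j
  have mono {i i'} (h : i ≤ i') : perpSet (P j i) ⊆ perpSet (P j i') :=
    fun Z hZ p hp => hZ p (hP j h hp)
  exact ⟨max i₁ i₃, mem_perpSet_of_distTriang hTr (mono (le_max_left _ _) hi₁)
    (mono (le_max_right _ _) hi₃)⟩

end Pretriangulated

end Preadditive

theorem TriMetric.antitone_M (μ : TriMetric S) : Antitone μ.M :=
  antitone_nat_of_succ_le μ.antitone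

section Functor

variable {C D : Type*} [Category.{v} C] [Preadditive C] [Category.{v} D] [Preadditive D]
  (G : C ⥤ D) [G.Additive]

theorem yMap_app_id {c : C} {X : D} (k : G.obj c ⟶ X) :
    (yMap G k).app (Opposite.op c) (𝟙 c) = k := by
  change G.map (𝟙 c) ≫ k = k
  simp

theorem forall_hom_yObj_eq_zero_iff (c : C) (X : D) :
    (∀ f : preadditiveYoneda.obj c ⟶ yObj G X, f = 0) ↔ ∀ g : G.obj c ⟶ X, g = 0 := by
  refine ⟨fun h g => ?_, fun h f => preadditiveYoneda_hom_ext (h _)⟩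
  rw [← yMap_app_id G g, h (yMap G g)]
  rfl

end Functor

theorem exists_iso_shift_of_mem_image_shift {C D : Type*} [Category C] [Category D]
    [HasShift C ℤ] [HasShift D ℤ] (G : C ⥤ D) [G.CommShift ℤ] (M : Set C) (j n : ℤ) :
    ∀ p ∈ (fun c => G.obj (c⟦j + n⟧)) '' M, ∃ q ∈ (fun c => G.obj (c⟦j⟧)) '' M,
      Nonempty (p ≅ q⟦n⟧) := by
  rintro _ ⟨c, hc, rfl⟩
  exact ⟨_, ⟨c, hc, rfl⟩, ⟨G.mapIso ((shiftFunctorAdd C j n).app c) ≪≫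
    (G.commShiftIso n).app (c⟦j⟧)⟩⟩

theorem yObj_mem_Fc_iff {D : Type*} [Category.{v} D] [Preadditive D] (G : S ⥤ D) [G.Additive]
    (μ : TriMetric S) (X : D) :
    yObj G X ∈ Fc μ ↔ X ∈ eventuallyPerp fun j i => (fun s => G.obj (s⟦j⟧)) '' μ.M i := by
  simp only [Fc, Set.mem_ofPred_eq, forall_hom_yObj_eq_zero_iff, mem_eventuallyPerp, perpSet,
    Set.forall_mem_image]

theorem statement5 [F.CommShift ℤ]
    (μ : TriMetric S) :
    ({X : T | yObj F X ∈ Fc μ} =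
      ⋂ j : ℤ, ⋃ i : ℕ, perpSet ((fun s : S => F.obj (s⟦j⟧)) '' μ.M i)) ∧
    ((0 : T) ∈ {X : T | yObj F X ∈ Fc μ}) ∧
    (∀ X Y : T, (X ≅ Y) → yObj F X ∈ Fc μ → yObj F Y ∈ Fc μ) ∧
    (∀ X : T, yObj F X ∈ Fc μ ↔ yObj F (X⟦(1 : ℤ)⟧) ∈ Fc μ) ∧
    (∀ Tr ∈ (distTriang T), yObj F Tr.obj₁ ∈ Fc μ → yObj F Tr.obj₃ ∈ Fc μ →
      yObj F Tr.obj₂ ∈ Fc μ) ∧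
    (∀ (X Y : T) (r : X ⟶ Y) (s : Y ⟶ X), s ≫ r = 𝟙 Y →
      yObj F X ∈ Fc μ → yObj F Y ∈ Fc μ) := by
  have hmem := yObj_mem_Fc_iff F μ
  have hanti : ∀ j : ℤ, Antitone fun i => (fun s : S => F.obj (s⟦j⟧)) '' μ.M i :=
    fun j _ _ h => Set.image_mono (μ.antitone_M h)
  have hshift := fun (j n : ℤ) i => exists_iso_shift_of_mem_image_shift F (μ.M i) j n
  simp only [Set.mem_ofPred_eq, hmem]
  exact ⟨rfl, zero_mem_eventuallyPerp, fun X Y e => mem_eventuallyPerp_of_iso e,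
    fun X => (shift_one_mem_eventuallyPerp_iff hshift).symm,
    fun Tr hTr => mem_eventuallyPerp_of_distTriang hanti hTr, fun _ _ => mem_eventuallyPerp_of_retract⟩

end Stmt5
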